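/- arXiv:1201.6226 — 2 statements merged into one kernel-verified Lean document; each statement's English description precedes it below -/
import Mathlib

section
/- Let f : [a,b] → ℝ be continuous and integrable on [a,b] with 0 ≤ a < b, let l ≥ 1, and suppose |f|^l is (α,m)-convex for some fixed (α,m) ∈ (0,1]². Then for any fixed p, q > 0, ∫_a^b (x-a)^p (b-x)^q f(x) dx ≤ (b-a)^{p+q+1} [β(p+1, q+1)]^{(l-1)/l} [β(q+α+1, p+1)|f(a)|^l + m(β(q+1, p+1) − β(q+α+1, p+1))|f(b/m)|^l]^{1/l}. -/
open Real Set MeasureTheory intervalIntegral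

noncomputable def beta (x y : ℝ) : ℝ := ∫ t in (0:ℝ)..1, t ^ (x-1) * (1-t) ^ (y-1)

def AMConvexOn (s : Set ℝ) (α m : ℝ) (g : ℝ → ℝ) : Prop :=
  ∀ x ∈ s, ∀ y ∈ s, ∀ t ∈ Set.Icc (0:ℝ) 1, g (t*x + m*(1-t)*y) ≤ t ^ α * g x + m*(1 - t ^ α) * g y

/-!
The substitution `x = a + (b - a) t` turns the integral into
`(b - a) ^ (p + q + 1) * ∫₀¹ t ^ p (1 - t) ^ q f (a + (b - a) t)`. Replace `f` by `|f|` and apply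
the power mean inequality for the weight `t ^ p (1 - t) ^ q`, whose mass is `β(p+1, q+1)`.
Since `a + (b - a) t = (1 - t) a + m t (b / m)`, the `(α, m)`-convexity of `|f| ^ l` bounds the
remaining integrand by `(1 - t) ^ α |f a| ^ l + m (1 - (1 - t) ^ α) |f (b / m)| ^ l`, and
integrating against the weight gives the Beta values on the right.
-/

theorem integral_mul_le_power_mean {X : Type*} [MeasurableSpace X] {μ : Measure X} {l : ℝ}
    (hl : 1 ≤ l) {w g : X → ℝ} (hw : 0 ≤ᵐ[μ] w) (hg : 0 ≤ᵐ[μ] g)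
    (hg_meas : AEStronglyMeasurable g μ) (hw_int : Integrable w μ)
    (hwg_int : Integrable (fun x => w x * g x ^ l) μ) :
    ∫ x, w x * g x ∂μ
      ≤ (∫ x, w x ∂μ) ^ ((l - 1) / l) * (∫ x, w x * g x ^ l ∂μ) ^ (1 / l) := by
  rcases hl.eq_or_lt with rfl | hl
  · simp
  -- Hölder for `w ^ r` and `w ^ (1 / l) * g`, with the conjugate exponents `1 / r` and `l`.
  set r := (l - 1) / l
  have hl0 : 0 < l := by linarith
  have hr : 0 < r := div_pos (by linarith) hl0
  have hrl : r + 1 / l = 1 := by rw [← add_div, sub_add_cancel, div_self hl0.ne']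
  have hconj : (1 / r).HolderConjugate l := by
    simpa using holderConjugate_one_div hr (by positivity) hrl
  have hF : MemLp (fun x => w x ^ r) (ENNReal.ofReal (1 / r)) μ := by
    rw [← integrable_norm_rpow_iff (hw_int.aemeasurable.pow_const r).aestronglyMeasurable
      (by simp [hr]) (by simp), ENNReal.toReal_ofReal (by positivity)]
    refine hw_int.congr ?_
    filter_upwards [hw] with x hx
    rw [norm_of_nonneg (rpow_nonneg hx _), ← rpow_mul hx, mul_one_div_cancel hr.ne', rpow_one]
  have hG : MemLp (fun x => w x ^ (1 / l) * g x) (ENNReal.ofReal l) μ := by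
    rw [← integrable_norm_rpow_iff (f := fun x => w x ^ (1 / l) * g x)
      ((hw_int.aemeasurable.pow_const _).aestronglyMeasurable.mul hg_meas)
      (by simp [hl0]) (by simp), ENNReal.toReal_ofReal hl0.le]
    refine hwg_int.congr ?_
    filter_upwards [hw, hg] with x hx hgx
    rw [norm_of_nonneg (mul_nonneg (rpow_nonneg hx _) hgx), mul_rpow (rpow_nonneg hx _) hgx,
      ← rpow_mul hx, one_div_mul_cancel hl0.ne', rpow_one]
  have holder := integral_mul_le_Lp_mul_Lq_of_nonneg hconj
    (hw.mono fun x hx => rpow_nonneg hx r)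
    (by filter_upwards [hw, hg] with x hx hgx; exact mul_nonneg (rpow_nonneg hx _) hgx)
    hF hG
  have h_prod : ∫ x, w x ^ r * (w x ^ (1 / l) * g x) ∂μ = ∫ x, w x * g x ∂μ := by
    refine integral_congr_ae ?_
    filter_upwards [hw] with x hx
    rw [← mul_assoc, ← rpow_add' hx (by rw [hrl]; norm_num), hrl, rpow_one]
  have h_left : ∫ x, (w x ^ r) ^ (1 / r) ∂μ = ∫ x, w x ∂μ := by
    refine integral_congr_ae ?_
    filter_upwards [hw] with x hx
    rw [← rpow_mul hx, mul_one_div_cancel hr.ne', rpow_one]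
  have h_right : ∫ x, (w x ^ (1 / l) * g x) ^ l ∂μ = ∫ x, w x * g x ^ l ∂μ := by
    refine integral_congr_ae ?_
    filter_upwards [hw, hg] with x hx hgx
    rw [mul_rpow (rpow_nonneg hx _) hgx, ← rpow_mul hx, one_div_mul_cancel hl0.ne', rpow_one]
  rwa [h_prod, h_left, h_right, one_div_one_div] at holder

theorem intervalIntegral.integral_mul_le_power_mean {a b l : ℝ} (hab : a ≤ b) (hl : 1 ≤ l)
    {w g : ℝ → ℝ} (hw : ContinuousOn w (Icc a b)) (hg : ContinuousOn g (Icc a b))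
    (hw0 : ∀ x ∈ Icc a b, 0 ≤ w x) (hg0 : ∀ x ∈ Icc a b, 0 ≤ g x) :
    ∫ x in a..b, w x * g x
      ≤ (∫ x in a..b, w x) ^ ((l - 1) / l) * (∫ x in a..b, w x * g x ^ l) ^ (1 / l) := by
  have hl0 : 0 ≤ l := by linarith
  simp only [integral_of_le hab]
  refine _root_.integral_mul_le_power_mean hl ?_ ?_ ?_ ?_ ?_
  · exact (ae_restrict_mem measurableSet_Ioc).mono fun x hx => hw0 x (Ioc_subset_Icc_self hx)
  · exact (ae_restrict_mem measurableSet_Ioc).mono fun x hx => hg0 x (Ioc_subset_Icc_self hx)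
  · exact (hg.mono Ioc_subset_Icc_self).aestronglyMeasurable measurableSet_Ioc
  · exact (hw.integrableOn_Icc).mono_set Ioc_subset_Icc_self
  · exact ((hw.mul (hg.rpow_const fun _ _ => Or.inr hl0)).integrableOn_Icc).mono_set
      Ioc_subset_Icc_self

lemma beta_comm (x y : ℝ) : beta x y = beta y x := by
  have h := integral_comp_sub_left (fun t : ℝ => t ^ (x - 1) * (1 - t) ^ (y - 1)) (1 : ℝ)
    (a := 0) (b := 1)
  simp only [sub_self, sub_zero, sub_sub_cancel] at h
  simp only [beta, ← h, mul_comm]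

lemma beta_add_one_add_one (x y : ℝ) :
    beta (x + 1) (y + 1) = ∫ t in (0:ℝ)..1, t ^ x * (1 - t) ^ y := by
  simp only [beta, add_sub_cancel_right]

lemma continuous_rpow_mul_one_sub_rpow {p q : ℝ} (hp : 0 ≤ p) (hq : 0 ≤ q) :
    Continuous fun t : ℝ => t ^ p * (1 - t) ^ q :=
  (continuous_rpow_const hp).mul
    ((continuous_rpow_const hq).comp (continuous_const.sub continuous_id))

lemma integral_sub_rpow_mul_sub_rpow_mul {a b : ℝ} (hab : a < b) (p q : ℝ) (g : ℝ → ℝ) :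
    ∫ x in a..b, (x - a) ^ p * (b - x) ^ q * g x
      = (b - a) ^ (p + q + 1) * ∫ t in (0:ℝ)..1, t ^ p * (1 - t) ^ q * g (a + (b - a) * t) := by
  have hba : 0 < b - a := sub_pos.2 hab
  have h := smul_integral_comp_mul_add (a := 0) (b := 1)
    (fun x => (x - a) ^ p * (b - x) ^ q * g x) (b - a) a
  rw [mul_zero, zero_add, mul_one, sub_add_cancel] at h
  rw [← h, smul_eq_mul, rpow_add hba, rpow_add hba, rpow_one,
    ← intervalIntegral.integral_const_mul, ← intervalIntegral.integral_const_mul]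
  refine integral_congr fun t ht => ?_
  rw [uIcc_of_le zero_le_one] at ht
  rw [show (b - a) * t + a - a = (b - a) * t by ring,
    show b - ((b - a) * t + a) = (b - a) * (1 - t) by ring,
    mul_rpow hba.le ht.1, mul_rpow hba.le (sub_nonneg.2 ht.2), add_comm _ a]
  ring

namespace AMConvexOn

variable {s : Set ℝ} {α m : ℝ} {g : ℝ → ℝ}

lemma apply_add_mul_sub_le (hg : AMConvexOn s α m g) (hm : m ≠ 0) {a b : ℝ} (ha : a ∈ s)
    (hb : b / m ∈ s) {t : ℝ} (ht : t ∈ Icc (0:ℝ) 1) :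
    g (a + (b - a) * t) ≤ (1 - t) ^ α * g a + m * (1 - (1 - t) ^ α) * g (b / m) := by
  have h := hg a ha (b / m) hb (1 - t) ⟨sub_nonneg.2 ht.2, by linarith [ht.1]⟩
  rwa [show (1 - t) * a + m * (1 - (1 - t)) * (b / m) = a + (b - a) * t by field_simp; ring] at h

lemma integral_rpow_mul_one_sub_rpow_mul_le (hg : AMConvexOn s α m g) (hm : m ≠ 0)
    (hα : 0 ≤ α) {a b : ℝ} (ha : a ∈ s) (hb : b / m ∈ s) {p q : ℝ} (hp : 0 ≤ p) (hq : 0 ≤ q)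
    (hint : IntervalIntegrable (fun t => t ^ p * (1 - t) ^ q * g (a + (b - a) * t)) volume 0 1) :
    ∫ t in (0:ℝ)..1, t ^ p * (1 - t) ^ q * g (a + (b - a) * t)
      ≤ beta (q + α + 1) (p + 1) * g a
        + m * (beta (q + 1) (p + 1) - beta (q + α + 1) (p + 1)) * g (b / m) := by
  have hint_w (r : ℝ) (hr : 0 ≤ r) :
      IntervalIntegrable (fun t : ℝ => t ^ p * (1 - t) ^ r) volume 0 1 :=
    (continuous_rpow_mul_one_sub_rpow hp hr).intervalIntegrable 0 1
  have hqα := add_nonneg hq hα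
  calc ∫ t in (0:ℝ)..1, t ^ p * (1 - t) ^ q * g (a + (b - a) * t)
      ≤ ∫ t in (0:ℝ)..1, g a * (t ^ p * (1 - t) ^ (q + α))
          + m * g (b / m) * (t ^ p * (1 - t) ^ q - t ^ p * (1 - t) ^ (q + α)) := by
        refine integral_mono_on zero_le_one hint (((hint_w _ hqα).const_mul _).add
          (((hint_w q hq).sub (hint_w _ hqα)).const_mul _)) fun t ht => ?_
        have h1t : 0 ≤ 1 - t := sub_nonneg.2 ht.2
        calc t ^ p * (1 - t) ^ q * g (a + (b - a) * t)
            ≤ t ^ p * (1 - t) ^ q * ((1 - t) ^ α * g a + m * (1 - (1 - t) ^ α) * g (b / m)) :=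
              mul_le_mul_of_nonneg_left (hg.apply_add_mul_sub_le hm ha hb ht)
                (mul_nonneg (rpow_nonneg ht.1 _) (rpow_nonneg h1t _))
          _ = _ := by rw [rpow_add_of_nonneg h1t hq hα]; ring
    _ = _ := by
        rw [intervalIntegral.integral_add ((hint_w _ hqα).const_mul _)
            (((hint_w q hq).sub (hint_w _ hqα)).const_mul _),
          intervalIntegral.integral_const_mul, intervalIntegral.integral_const_mul,
          intervalIntegral.integral_sub (hint_w q hq) (hint_w _ hqα),
          beta_comm, beta_comm (q + 1), beta_add_one_add_one, beta_add_one_add_one]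
        ring

end AMConvexOn

theorem stmt9_general (a b p q : ℝ) (f : ℝ → ℝ)
    (ha : 0 ≤ a) (hab : a < b) (hp : 0 < p) (hq : 0 < q)
    (hcont : ContinuousOn f (Set.Icc a b))
    (l : ℝ) (hl : 1 ≤ l)
    (α m : ℝ) (hα : α ∈ Set.Ioc (0:ℝ) 1) (hm : m ∈ Set.Ioc (0:ℝ) 1)
    (hf : AMConvexOn (Set.Icc 0 (b/m)) α m (fun x => |f x| ^ l)) :
    ∫ x in a..b, (x-a)^p * (b-x)^q * f x
      ≤ (b-a)^(p+q+1) * (beta (p+1) (q+1))^((l-1)/l)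
          * (beta (q+α+1) (p+1) * |f a| ^ l
              + m * (beta (q+1) (p+1) - beta (q+α+1) (p+1)) * |f (b/m)| ^ l) ^ (1/l) := by
  obtain ⟨hm0, hm1⟩ := hm
  set w := fun t : ℝ => t ^ p * (1 - t) ^ q
  set F := fun t : ℝ => |f (a + (b - a) * t)|
  have hw : ContinuousOn w (Icc 0 1) := (continuous_rpow_mul_one_sub_rpow hp.le hq.le).continuousOn
  have hw0 : ∀ t ∈ Icc (0:ℝ) 1, 0 ≤ w t := fun t ht =>
    mul_nonneg (rpow_nonneg ht.1 _) (rpow_nonneg (sub_nonneg.2 ht.2) _)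
  have hfφ : ContinuousOn (fun t => f (a + (b - a) * t)) (Icc 0 1) :=
    hcont.comp (by fun_prop) fun t ht => ⟨by nlinarith [ht.1], by nlinarith [ht.2]⟩
  have hF0 : ∀ t ∈ Icc (0:ℝ) 1, 0 ≤ F t := fun t _ => abs_nonneg _
  have hbm : b ≤ b / m := (le_div_iff₀ hm0).2 (mul_le_of_le_one_right (ha.trans hab.le) hm1)
  have hconvex := hf.integral_rpow_mul_one_sub_rpow_mul_le hm0.ne' hα.1.le
    ⟨ha, hab.le.trans hbm⟩ ⟨(ha.trans hab.le).trans hbm, le_rfl⟩ hp.le hq.le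
    ((hw.mul (hfφ.abs.rpow_const fun _ _ => Or.inr (zero_le_one.trans hl)))
      |>.intervalIntegrable_of_Icc zero_le_one)
  rw [integral_sub_rpow_mul_sub_rpow_mul hab, beta_add_one_add_one]
  refine (mul_le_mul_of_nonneg_left ?_ (rpow_nonneg (sub_nonneg.2 hab.le) _)).trans_eq
    (mul_assoc _ _ _).symm
  calc ∫ t in (0:ℝ)..1, w t * f (a + (b - a) * t)
      ≤ ∫ t in (0:ℝ)..1, w t * F t :=
        integral_mono_on zero_le_one ((hw.mul hfφ).intervalIntegrable_of_Icc zero_le_one)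
          ((hw.mul hfφ.abs).intervalIntegrable_of_Icc zero_le_one) fun t ht =>
          mul_le_mul_of_nonneg_left (le_abs_self _) (hw0 t ht)
    _ ≤ (∫ t in (0:ℝ)..1, w t) ^ ((l - 1) / l)
          * (∫ t in (0:ℝ)..1, w t * F t ^ l) ^ (1 / l) :=
        integral_mul_le_power_mean zero_le_one hl hw hfφ.abs hw0 hF0
    _ ≤ _ := by
        refine mul_le_mul_of_nonneg_left (rpow_le_rpow ?_ hconvex (by positivity))
          (rpow_nonneg (integral_nonneg zero_le_one hw0) _)
        exact integral_nonneg zero_le_one fun t ht =>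
          mul_nonneg (hw0 t ht) (rpow_nonneg (hF0 t ht) _)

theorem stmt9 (a b p q : ℝ) (f : ℝ → ℝ)
    (ha : 0 ≤ a) (hab : a < b) (hp : 0 < p) (hq : 0 < q)
    (hcont : ContinuousOn f (Set.Icc a b))
    (hint : IntervalIntegrable f volume a b)
    (l : ℝ) (hl : 1 ≤ l)
    (α m : ℝ) (hα : α ∈ Set.Ioc (0:ℝ) 1) (hm : m ∈ Set.Ioc (0:ℝ) 1)
    (hf : AMConvexOn (Set.Icc 0 (b/m)) α m (fun x => |f x| ^ l)) :
    ∫ x in a..b, (x-a)^p * (b-x)^q * f x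
      ≤ (b-a)^(p+q+1) * (beta (p+1) (q+1))^((l-1)/l)
          * (beta (q+α+1) (p+1) * |f a| ^ l
              + m * (beta (q+1) (p+1) - beta (q+α+1) (p+1)) * |f (b/m)| ^ l) ^ (1/l) :=
  stmt9_general a b p q f ha hab hp hq hcont l hl α m hα hm hf
end

section
/- Let f : [a,b] → ℝ be continuous and integrable on [a,b] with 0 ≤ a < b, let l ≥ 1, and suppose |f|^l is quasi-convex on [a,b]. Then for any fixed p, q > 0, ∫_a^b (x-a)^p (b-x)^q f(x) dx ≤ (b-a)^{p+q+1} β(p+1, q+1) (max{|f(a)|^l, |f(b)|^l})^{1/l}. -/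
open Real Set MeasureTheory intervalIntegral

def QuasiConvexOn' (s : Set ℝ) (g : ℝ → ℝ) : Prop :=
  ∀ x ∈ s, ∀ y ∈ s, ∀ lam ∈ Set.Icc (0:ℝ) 1, g (lam*x + (1-lam)*y) ≤ max (g x) (g y)

/-!
Quasi-convexity of `|f|^l` bounds `|f|` on `[a, b]` by `M = (max (|f a|^l) (|f b|^l))^(1/l)`,
so the integral is at most `M ∫ₐᵇ (x-a)^p (b-x)^q dx`, and the substitution `x = a + (b-a) t`
turns this weight integral into `(b-a)^(p+q+1) β(p+1, q+1)`.
-/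

theorem QuasiConvexOn'.le_max_of_mem_Icc {g : ℝ → ℝ} {a b x : ℝ}
    (hg : QuasiConvexOn' (Icc a b) g) (hab : a < b) (hx : x ∈ Icc a b) :
    g x ≤ max (g a) (g b) := by
  have hba : 0 < b - a := sub_pos.mpr hab
  have hlam : (b - x) / (b - a) ∈ Icc (0:ℝ) 1 :=
    ⟨div_nonneg (by linarith [hx.2]) hba.le, (div_le_one hba).mpr (by linarith [hx.1])⟩
  have hcomb : (b - x) / (b - a) * a + (1 - (b - x) / (b - a)) * b = x := by
    field_simp
    ring
  simpa only [hcomb] using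
    hg a (left_mem_Icc.mpr hab.le) b (right_mem_Icc.mpr hab.le) _ hlam

theorem abs_le_rpow_one_div_max_of_quasiConvexOn' {f : ℝ → ℝ} {a b l x : ℝ}
    (hf : QuasiConvexOn' (Icc a b) (fun x => |f x| ^ l)) (hab : a < b) (hl : 0 < l)
    (hx : x ∈ Icc a b) :
    |f x| ≤ (max (|f a| ^ l) (|f b| ^ l)) ^ (1/l) := by
  rw [one_div, le_rpow_inv_iff_of_pos (abs_nonneg _)
    (le_max_of_le_left (rpow_nonneg (abs_nonneg _) _)) hl]
  exact hf.le_max_of_mem_Icc hab hx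

theorem integral_sub_rpow_mul_sub_rpow {a b : ℝ} (hab : a < b) (p q : ℝ) :
    ∫ x in a..b, (x-a)^p * (b-x)^q = (b-a)^(p+q+1) * beta (p+1) (q+1) := by
  have hba : 0 < b - a := sub_pos.mpr hab
  have hsubst := smul_integral_comp_mul_add (a := 0) (b := 1)
    (fun x : ℝ => (x-a)^p * (b-x)^q) (b - a) a
  simp only [mul_zero, zero_add, mul_one, sub_add_cancel, smul_eq_mul] at hsubst
  have hscale : ∀ t ∈ uIcc (0:ℝ) 1, ((b-a)*t + a - a)^p * (b - ((b-a)*t + a))^q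
      = (b-a)^p * (b-a)^q * (t^p * (1-t)^q) := by
    intro t ht
    rw [uIcc_of_le zero_le_one] at ht
    rw [show (b-a)*t + a - a = (b-a)*t by ring, show b - ((b-a)*t + a) = (b-a)*(1-t) by ring,
      mul_rpow hba.le ht.1, mul_rpow hba.le (sub_nonneg.mpr ht.2)]
    ring
  rw [← hsubst, integral_congr hscale, intervalIntegral.integral_const_mul, beta,
    rpow_add hba, rpow_add hba, rpow_one]
  simp only [add_sub_cancel_right]
  ring

theorem integral_mul_le_integral_mul_const {w f : ℝ → ℝ} {a b M : ℝ} (hab : a ≤ b)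
    (hw : ContinuousOn w (Icc a b)) (hw0 : ∀ x ∈ Icc a b, 0 ≤ w x)
    (hf : IntervalIntegrable f volume a b) (hfM : ∀ x ∈ Icc a b, f x ≤ M) :
    ∫ x in a..b, w x * f x ≤ (∫ x in a..b, w x) * M := by
  rw [← intervalIntegral.integral_mul_const]
  refine integral_mono_on hab (hf.continuousOn_mul (uIcc_of_le hab ▸ hw)) ?_ fun x hx =>
    mul_le_mul_of_nonneg_left (hfM x hx) (hw0 x hx)
  exact (hw.mul continuousOn_const).intervalIntegrable_of_Icc hab

theorem stmt15_general (a b p q : ℝ) (f : ℝ → ℝ)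
    (hab : a < b) (hp : 0 < p) (hq : 0 < q)
    (hint : IntervalIntegrable f volume a b)
    (l : ℝ) (hl : 1 ≤ l)
    (hf : QuasiConvexOn' (Set.Icc a b) (fun x => |f x| ^ l)) :
    ∫ x in a..b, (x-a)^p * (b-x)^q * f x
      ≤ (b-a)^(p+q+1) * beta (p+1) (q+1)
          * (max (|f a| ^ l) (|f b| ^ l)) ^ (1/l) := by
  have hweight : ContinuousOn (fun x : ℝ => (x-a)^p * (b-x)^q) (Icc a b) := by
    fun_prop (disch := positivity)
  have hweight_nonneg : ∀ x ∈ Icc a b, 0 ≤ (x-a)^p * (b-x)^q := fun x hx =>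
    mul_nonneg (rpow_nonneg (sub_nonneg.mpr hx.1) _) (rpow_nonneg (sub_nonneg.mpr hx.2) _)
  have hbound : ∀ x ∈ Icc a b, f x ≤ (max (|f a| ^ l) (|f b| ^ l)) ^ (1/l) := fun x hx =>
    (le_abs_self _).trans (abs_le_rpow_one_div_max_of_quasiConvexOn' hf hab (by linarith) hx)
  rw [← integral_sub_rpow_mul_sub_rpow hab]
  exact integral_mul_le_integral_mul_const hab.le hweight hweight_nonneg hint hbound

theorem stmt15 (a b p q : ℝ) (f : ℝ → ℝ)
    (ha : 0 ≤ a) (hab : a < b) (hp : 0 < p) (hq : 0 < q)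
    (hcont : ContinuousOn f (Set.Icc a b))
    (hint : IntervalIntegrable f volume a b)
    (l : ℝ) (hl : 1 ≤ l)
    (hf : QuasiConvexOn' (Set.Icc a b) (fun x => |f x| ^ l)) :
    ∫ x in a..b, (x-a)^p * (b-x)^q * f x
      ≤ (b-a)^(p+q+1) * beta (p+1) (q+1)
          * (max (|f a| ^ l) (|f b| ^ l)) ^ (1/l) :=
  stmt15_general a b p q f hab hp hq hint l hl hf
end
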